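/- Let T be a rooted tree with preorder index function idx and endpoint(v) = max preorder index in subtree(v). For a vertex v and any vertex w ≠ v, w is a proper descendant of v if and only if idx(v) + 1 ≤ idx(w) ≤ endpoint(v). Hence, updating 'nearest voted parent candidates' by taking the pointwise maximum with constant idx(v) over the preorder-index interval [idx(v)+1, endpoint(v)] correctly records, for each vertex w, max over voted proper ancestors u of w of idx(u), and this maximum identifies the nearest voted ancestor of w. -/

import Mathlib

inductive RTree (α : Type) where
  | node : α → List (RTree α) → RTree α

namespace RTree
variable {α : Type} [DecidableEq α]

def label : RTree α → α | node a _ => a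
def children : RTree α → List (RTree α) | node _ ts => ts

mutual
def preorder : RTree α → List α
  | .node a ts => a :: preorderList ts
def preorderList : List (RTree α) → List α
  | [] => []
  | t :: ts => preorder t ++ preorderList ts
end

mutual
def bracket : RTree α → List α
  | .node a ts => a :: (bracketList ts ++ [a])
def bracketList : List (RTree α) → List α
  | [] => []
  | t :: ts => bracket t ++ bracketList ts
end

inductive Subtree : RTree α → RTree α → Prop
  | refl (t) : Subtree t t
  | child {t c s} : c ∈ children t → Subtree c s → Subtree t s

/-- `u` is a proper ancestor of `v` in `t`. -/
def ProperAncestor (t : RTree α) (u v : α) : Prop :=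
  ∃ s, Subtree t s ∧ s.label = u ∧ v ∈ preorder s ∧ u ≠ v

/-- `u` is a (weak) ancestor of `v` in `t`. -/
def Ancestor (t : RTree α) (u v : α) : Prop :=
  ∃ s, Subtree t s ∧ s.label = u ∧ v ∈ preorder s

/-- preorder index (0-based). -/
def idx (t : RTree α) (v : α) : ℕ := (preorder t).idxOf v

/-- position of the entering (left) bracket of `v`. -/
def leftB (t : RTree α) (v : α) : ℕ := (bracket t).idxOf v

/-- position of the exiting (right) bracket of `v` (last occurrence). -/
def rightB (t : RTree α) (v : α) : ℕ :=
  (bracket t).length - 1 - (bracket t).reverse.idxOf v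

mutual
def depthList : RTree α → ℕ → List (α × ℕ)
  | .node a ts, d => (a, d) :: depthListL ts (d+1)
def depthListL : List (RTree α) → ℕ → List (α × ℕ)
  | [], _ => []
  | t :: ts, d => depthList t d ++ depthListL ts d
end

/-- depth of vertex `v` in `t` (distance from the root). -/
def depth (t : RTree α) (v : α) : ℕ :=
  (((depthList t 0).filter (fun p => p.1 = v)).map (·.2)).headD 0

end RTree

set_option linter.unusedSectionVars false

namespace RTree
variable {α : Type} [DecidableEq α]

theorem preorder_eq (a : α) (ts) : preorder (node a ts) = a :: preorderList ts := rfl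

theorem label_mem_preorder (s : RTree α) : s.label ∈ preorder s := by
  cases s with | node a ts => simp [preorder, label]

theorem preorder_infix_of_mem_list {c : RTree α} {ts : List (RTree α)} (h : c ∈ ts) :
    preorder c <:+: preorderList ts := by
  induction ts with
  | nil => cases h
  | cons hd tl ih =>
    rcases List.mem_cons.1 h with rfl | h
    · exact ⟨[], preorderList tl, by simp [preorderList]⟩
    · exact (ih h).trans ⟨preorder hd, [], by simp [preorderList]⟩

theorem preorder_infix_of_mem_children {c t : RTree α} (h : c ∈ children t) :
    preorder c <:+: preorder t := by
  cases t with | node a ts =>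
    simp only [children] at h
    exact (preorder_infix_of_mem_list h).trans ⟨[a], [], by simp [preorder]⟩

theorem preorder_infix {t s : RTree α} (h : Subtree t s) : preorder s <:+: preorder t := by
  induction h with
  | refl => exact List.infix_refl _
  | child hc _ ih => exact ih.trans (preorder_infix_of_mem_children hc)

theorem preorder_eq' (t : RTree α) : preorder t = t.label :: preorderList t.children := by
  cases t; rfl

theorem nodup_of_subtree {t s : RTree α} (h : Subtree t s) (hnd : (preorder t).Nodup) :
    (preorder s).Nodup := (preorder_infix h).sublist.nodup hnd

theorem mem_of_subtree_mem {t s : RTree α} {w : α} (h : Subtree t s) (hw : w ∈ preorder s) :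
    w ∈ preorder t := (preorder_infix h).subset hw

theorem unique_child {c c' : RTree α} {ts : List (RTree α)} {w : α}
    (hnd : (preorderList ts).Nodup) (hc : c ∈ ts) (hc' : c' ∈ ts)
    (hw : w ∈ preorder c) (hw' : w ∈ preorder c') : c = c' := by
  induction ts with
  | nil => cases hc
  | cons hd tl ih =>
    rw [show preorderList (hd :: tl) = preorder hd ++ preorderList tl from rfl] at hnd
    have hdisj := List.disjoint_of_nodup_append hnd
    rcases List.mem_cons.1 hc with rfl | hc2
    · rcases List.mem_cons.1 hc' with rfl | hc2'
      · rfl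
      · exact absurd (show w ∈ preorderList tl from (preorder_infix_of_mem_list hc2').subset hw') (hdisj hw)
    · rcases List.mem_cons.1 hc' with rfl | hc2'
      · exact absurd (show w ∈ preorderList tl from (preorder_infix_of_mem_list hc2).subset hw) (hdisj hw')
      · exact ih (hnd.of_append_right) hc2 hc2'

theorem subtree_chain {t s s' : RTree α} {w : α} (h : Subtree t s) :
    (preorder t).Nodup → Subtree t s' → w ∈ preorder s → w ∈ preorder s' →
    Subtree s s' ∨ Subtree s' s := by
  induction h generalizing s' with
  | refl t => intro _ h' _ _; exact .inl h'
  | @child t c s hc hcs ih =>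
    intro hnd h' hw hw'
    cases h' with
    | refl => exact .inr (.child hc hcs)
    | @child _ c' _ hc' hcs' =>
      rw [preorder_eq'] at hnd
      have hndl : (preorderList t.children).Nodup := hnd.of_cons
      have hcc : c = c' := unique_child hndl hc hc'
        (mem_of_subtree_mem hcs hw) (mem_of_subtree_mem hcs' hw')
      subst hcc
      exact ih (nodup_of_subtree (.child hc (.refl c)) (preorder_eq' t ▸ hnd)) hcs' hw hw'

theorem subtree_label_eq {s s' : RTree α} (h : Subtree s s') (hl : s.label = s'.label)
    (hnd : (preorder s).Nodup) : s = s' := by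
  cases h with
  | refl => rfl
  | @child _ c _ hc hcs =>
    exfalso
    have h1 : s'.label ∈ preorderList s.children :=
      (preorder_infix_of_mem_list hc).subset (mem_of_subtree_mem hcs (label_mem_preorder s'))
    rw [preorder_eq'] at hnd
    exact hnd.notMem (hl ▸ h1)

theorem subtree_unique {t s s' : RTree α} (hnd : (preorder t).Nodup)
    (h : Subtree t s) (h' : Subtree t s') (hl : s.label = s'.label) : s = s' := by
  rcases subtree_chain h hnd h' (label_mem_preorder s) (hl ▸ label_mem_preorder s') with hc | hc
  · exact subtree_label_eq hc hl (nodup_of_subtree h hnd)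
  · exact (subtree_label_eq hc hl.symm (nodup_of_subtree h' hnd)).symm

theorem idx_label {t s : RTree α} (hnd : (preorder t).Nodup) (h : Subtree t s)
    {p q : List α} (hpq : p ++ preorder s ++ q = preorder t) :
    idx t s.label = p.length := by
  have hnd2 : (p ++ (preorder s ++ q)).Nodup := by
    rw [← List.append_assoc, hpq]; exact hnd
  have hlp : s.label ∉ p := fun hlp =>
    (List.disjoint_of_nodup_append hnd2) hlp (List.mem_append_left _ (label_mem_preorder s))
  unfold idx
  rw [← hpq, List.append_assoc, List.idxOf_append_of_notMem hlp,
    List.idxOf_append_of_mem (label_mem_preorder s), preorder_eq' s,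
    List.idxOf_cons_self]
  omega

theorem idx_eq {t s : RTree α} {w : α} (hnd : (preorder t).Nodup) (h : Subtree t s)
    (hw : w ∈ preorder s) : idx t w = idx t s.label + (preorder s).idxOf w := by
  obtain ⟨p, q, hpq⟩ := preorder_infix h
  have hnd2 : (p ++ (preorder s ++ q)).Nodup := by
    rw [← List.append_assoc, hpq]; exact hnd
  have hwp : w ∉ p := fun hwp =>
    (List.disjoint_of_nodup_append hnd2) hwp (List.mem_append_left _ hw)
  rw [idx_label hnd h hpq]
  unfold idx
  rw [← hpq, List.append_assoc, List.idxOf_append_of_notMem hwp,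
    List.idxOf_append_of_mem hw]

theorem idx_not_mem {t s : RTree α} {w : α} (hnd : (preorder t).Nodup) (h : Subtree t s)
    (hwt : w ∈ preorder t) (hws : w ∉ preorder s) :
    idx t w < idx t s.label ∨ idx t s.label + (preorder s).length ≤ idx t w := by
  obtain ⟨p, q, hpq⟩ := preorder_infix h
  have hnd2 : (p ++ (preorder s ++ q)).Nodup := by
    rw [← List.append_assoc, hpq]; exact hnd
  have hil := idx_label hnd h hpq
  have hwmem : w ∈ p ∨ w ∈ q := by
    rw [← hpq] at hwt
    rcases List.mem_append.1 hwt with h1 | h1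
    · rcases List.mem_append.1 h1 with h2 | h2
      · exact .inl h2
      · exact absurd h2 hws
    · exact .inr h1
  rcases hwmem with hwp | hwq
  · left
    have : idx t w = p.idxOf w := by
      unfold idx
      rw [← hpq, List.append_assoc, List.idxOf_append_of_mem hwp]
    rw [this, hil]
    exact List.idxOf_lt_length_iff.2 hwp
  · right
    have hwnp : w ∉ p := fun hwp =>
      (List.disjoint_of_nodup_append hnd2) hwp
        (List.mem_append_right _ hwq)
    have : idx t w = p.length + ((preorder s).length + q.idxOf w) := by
      unfold idx
      rw [← hpq, List.append_assoc, List.idxOf_append_of_notMem hwnp,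
        List.idxOf_append_of_notMem hws]
    omega

mutual
theorem map_fst_depthList (t : RTree α) (d : ℕ) :
    (depthList t d).map Prod.fst = preorder t := by
  cases t with
  | node a ts => simp [depthList, preorder, map_fst_depthListL]
theorem map_fst_depthListL (ts : List (RTree α)) (d : ℕ) :
    (depthListL ts d).map Prod.fst = preorderList ts := by
  cases ts with
  | nil => rfl
  | cons t ts => simp [depthListL, preorderList, map_fst_depthList, map_fst_depthListL]
end

mutual
theorem depthList_shift (t : RTree α) (d e : ℕ) :
    depthList t (d + e) = (depthList t d).map (fun p => (p.1, p.2 + e)) := by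
  cases t with
  | node a ts =>
    show (a, d + e) :: depthListL ts (d + e + 1) = _
    rw [show d + e + 1 = (d + 1) + e by omega, depthListL_shift ts (d+1) e]
    simp [depthList]
theorem depthListL_shift (ts : List (RTree α)) (d e : ℕ) :
    depthListL ts (d + e) = (depthListL ts d).map (fun p => (p.1, p.2 + e)) := by
  cases ts with
  | nil => rfl
  | cons t ts =>
    show depthList t (d + e) ++ depthListL ts (d + e) = _
    rw [depthList_shift t d e, depthListL_shift ts d e]
    simp [depthListL]
end

mutual
theorem le_snd_depthList (t : RTree α) (d : ℕ) {p : α × ℕ} (h : p ∈ depthList t d) :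
    d ≤ p.2 := by
  cases t with
  | node a ts =>
    rcases List.mem_cons.1 h with rfl | h
    · exact le_refl d
    · exact le_trans (Nat.le_succ d) (le_snd_depthListL ts (d+1) h)
theorem le_snd_depthListL (ts : List (RTree α)) (d : ℕ) {p : α × ℕ} (h : p ∈ depthListL ts d) :
    d ≤ p.2 := by
  cases ts with
  | nil => cases h
  | cons t ts =>
    rcases List.mem_append.1 h with h | h
    · exact le_snd_depthList t d h
    · exact le_snd_depthListL ts d h
end

theorem depthList_infix_of_mem_list {c : RTree α} {ts : List (RTree α)} (h : c ∈ ts) (d : ℕ) :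
    depthList c d <:+: depthListL ts d := by
  induction ts with
  | nil => cases h
  | cons hd tl ih =>
    rcases List.mem_cons.1 h with rfl | h
    · exact ⟨[], depthListL tl d, by simp [depthListL]⟩
    · exact (ih h).trans ⟨depthList hd d, [], by simp [depthListL]⟩

theorem depthList_infix {t s : RTree α} (h : Subtree t s) :
    ∃ d, depthList s d <:+: depthList t 0 := by
  induction h with
  | refl t => exact ⟨0, List.infix_refl _⟩
  | @child t c s hc hcs ih =>
    obtain ⟨d, hd⟩ := ih
    refine ⟨d + 1, ?_⟩
    have h1 : depthList s (d + 1) = (depthList s d).map (fun p => (p.1, p.2 + 1)) :=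
      depthList_shift s d 1
    have h2 : depthList c 1 = (depthList c 0).map (fun p => (p.1, p.2 + 1)) := by
      have := depthList_shift c 0 1; simpa using this
    have h3 : depthList s (d + 1) <:+: depthList c 1 := by
      rw [h1, h2]; exact hd.map _
    refine h3.trans ?_
    cases t with
    | node a ts =>
      simp only [children] at hc
      exact (depthList_infix_of_mem_list hc 1).trans ⟨[(a, 0)], [], by simp [depthList]⟩

theorem filter_depth_nil {l : List (α × ℕ)} {w : α} (h : w ∉ l.map Prod.fst) :
    l.filter (fun p => p.1 = w) = [] := by
  apply List.filter_eq_nil_iff.2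
  intro x hx
  simp only [decide_eq_true_eq]
  exact fun hxw => h (hxw ▸ List.mem_map_of_mem (f := Prod.fst) hx)

theorem filter_depth_ne_nil {l : List (α × ℕ)} {w : α} (h : w ∈ l.map Prod.fst) :
    l.filter (fun p => p.1 = w) ≠ [] := by
  obtain ⟨x, hx, hxv⟩ := List.mem_map.1 h
  intro hnil
  have hmem : x ∈ l.filter (fun p => p.1 = w) := List.mem_filter.2 ⟨hx, by simp [hxv]⟩
  rw [hnil] at hmem
  cases hmem

theorem depth_eval {t s : RTree α} {d : ℕ} (hnd : (preorder t).Nodup)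
    (hin : depthList s d <:+: depthList t 0) {v : α} (hv : v ∈ preorder s) :
    depth t v = d + depth s v := by
  obtain ⟨p, q, hpq⟩ := hin
  have hpre : p.map Prod.fst ++ preorder s ++ q.map Prod.fst = preorder t := by
    rw [← map_fst_depthList t 0, ← hpq]; simp [map_fst_depthList]
  have hnd2 : (p.map Prod.fst ++ (preorder s ++ q.map Prod.fst)).Nodup := by
    rw [← List.append_assoc, hpre]; exact hnd
  have hvp : v ∉ p.map Prod.fst := fun hx =>
    (List.disjoint_of_nodup_append hnd2) hx (List.mem_append_left _ hv)
  have hvq : v ∉ q.map Prod.fst := fun hx =>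
    (List.disjoint_of_nodup_append hnd2.of_append_right) hv hx
  have hfp : p.filter (fun x => x.1 = v) = [] := filter_depth_nil hvp
  have hfq : q.filter (fun x => x.1 = v) = [] := filter_depth_nil hvq
  have hshift : depthList s d = (depthList s 0).map (fun x => (x.1, x.2 + d)) := by
    have := depthList_shift s 0 d; simpa using this
  have hfmid : (depthList s d).filter (fun x => x.1 = v)
      = ((depthList s 0).filter (fun x => x.1 = v)).map (fun x => (x.1, x.2 + d)) := by
    rw [hshift, List.filter_map]
    rfl
  have hne : (depthList s 0).filter (fun x => x.1 = v) ≠ [] :=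
    filter_depth_ne_nil (by rw [map_fst_depthList]; exact hv)
  obtain ⟨x, F, hF⟩ := List.exists_cons_of_ne_nil hne
  unfold depth
  rw [← hpq, List.filter_append, List.filter_append, hfp, hfq, hfmid, hF]
  simp [Nat.add_comm]

theorem depth_eq {t s : RTree α} {w : α} (hnd : (preorder t).Nodup) (h : Subtree t s)
    (hw : w ∈ preorder s) : depth t w = depth t s.label + depth s w := by
  obtain ⟨d, hin⟩ := depthList_infix h
  have h1 := depth_eval hnd hin hw
  have h2 := depth_eval hnd hin (label_mem_preorder s)
  have h3 : depth s s.label = 0 := by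
    cases s with
    | node a ts => simp [depth, depthList, label]
  omega

theorem depth_pos {s s' : RTree α} (h : Subtree s s') (hne : s ≠ s')
    (hnd : (preorder s).Nodup) : 1 ≤ depth s s'.label := by
  cases h with
  | refl => exact absurd rfl hne
  | @child _ c _ hc hcs =>
    cases s with
    | node a ts =>
      simp only [children] at hc
      have hu : s'.label ∈ preorderList ts :=
        (preorder_infix_of_mem_list hc).subset
          (mem_of_subtree_mem hcs (label_mem_preorder s'))
      have hua : ¬ (a = s'.label) := by
        rw [preorder_eq] at hnd
        intro h'; exact hnd.notMem (h' ▸ hu)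
      have hne2 : (depthListL ts 1).filter (fun p => p.1 = s'.label) ≠ [] :=
        filter_depth_ne_nil (by rw [map_fst_depthListL]; exact hu)
      obtain ⟨y, F, hF⟩ := List.exists_cons_of_ne_nil hne2
      have hy : y ∈ depthListL ts 1 :=
        (List.mem_filter.1 (hF ▸ (List.mem_cons_self : y ∈ y :: F))).1
      have hy2 : 1 ≤ y.2 := le_snd_depthListL ts 1 hy
      have hdl : depthList (node a ts) 0 = (a, 0) :: depthListL ts 1 := rfl
      unfold depth
      rw [hdl, List.filter_cons, if_neg (by simp [hua]), hF]
      simpa using hy2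

theorem depth_label (s : RTree α) : depth s s.label = 0 := by
  cases s with
  | node a ts => simp [depth, depthList, label]

theorem indexOf_pos {s : RTree α} {w : α} (hw : w ∈ preorder s) (hne : w ≠ s.label) :
    1 ≤ (preorder s).idxOf w := by
  rw [preorder_eq' s, List.idxOf_cons_ne _ (Ne.symm hne)]
  omega

theorem subtree_strict {t s s' : RTree α} (hnd : (preorder t).Nodup)
    (hts : Subtree t s) (hss' : Subtree s s') (hne : s ≠ s') :
    idx t s.label < idx t s'.label ∧ depth t s.label < depth t s'.label := by
  have hmem : s'.label ∈ preorder s := (preorder_infix hss').subset (label_mem_preorder s')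
  have hlab : s.label ≠ s'.label := fun h =>
    hne (subtree_label_eq hss' h (nodup_of_subtree hts hnd))
  constructor
  · have h1 := idx_eq hnd hts hmem
    have h2 : 1 ≤ (preorder s).idxOf s'.label := indexOf_pos hmem (Ne.symm hlab)
    omega
  · have h1 := depth_eq hnd hts hmem
    have h2 := depth_pos hss' hne (nodup_of_subtree hts hnd)
    omega

end RTree

open RTree in
/-- (i) `w ≠ v` is a proper descendant of `v` (with subtree `s`) iff
`idx v + 1 ≤ idx w ≤ endpoint v`, where `endpoint v = idx v + size(subtree v) - 1`;
(ii) hence, taking pointwise maxima of preorder indices over voted (`∈ S`) proper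
ancestors correctly identifies the nearest voted ancestor: for a voted proper ancestor
`u₂` of `w`, having maximal preorder index among voted proper ancestors of `w` is
equivalent to having maximal depth among them. -/
theorem idx_interval_and_max_idx_identifies_nearest {α : Type} [DecidableEq α]
    (t : RTree α) (hnd : (preorder t).Nodup) (S : Set α) :
    (∀ s : RTree α, Subtree t s → ∀ w ∈ preorder t, w ≠ s.label →
       (ProperAncestor t s.label w ↔
         (idx t s.label + 1 ≤ idx t w ∧
          idx t w ≤ idx t s.label + (preorder s).length - 1))) ∧
    (∀ w ∈ preorder t, ∀ u₂, ProperAncestor t u₂ w → u₂ ∈ S →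
       ((∀ u, ProperAncestor t u w → u ∈ S → idx t u ≤ idx t u₂) ↔
        (∀ u, ProperAncestor t u w → u ∈ S → depth t u ≤ depth t u₂))) := by
  constructor
  · intro s hs w hwt hwne
    constructor
    · rintro ⟨s', hs', hlab, hw', hne'⟩
      have hse : s' = s := subtree_unique hnd hs' hs hlab
      subst hse
      have hidx := idx_eq hnd hs hw'
      have hlt : (preorder s').idxOf w < (preorder s').length := List.idxOf_lt_length_iff.2 hw'
      have hpos : 1 ≤ (preorder s').idxOf w := indexOf_pos hw' hwne
      omega
    · rintro ⟨h1, h2⟩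
      have hmem : w ∈ preorder s := by
        by_contra hws
        rcases idx_not_mem hnd hs hwt hws with h | h <;> omega
      exact ⟨s, hs, rfl, hmem, Ne.symm hwne⟩
  · intro w hwt u₂ hu₂ hS2
    obtain ⟨s₂, hs₂, rfl, hws₂, hne₂⟩ := hu₂
    constructor
    · intro hmax u hu hS
      obtain ⟨s, hs, rfl, hws, hne⟩ := hu
      rcases subtree_chain hs hnd hs₂ hws hws₂ with hc | hc
      · by_cases he : s = s₂
        · subst he; exact le_refl _
        · exact le_of_lt (subtree_strict hnd hs hc he).2
      · by_cases he : s₂ = s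
        · subst he; exact le_refl _
        · exfalso
          have h1 := (subtree_strict hnd hs₂ hc he).1
          have h2 := hmax _ ⟨s, hs, rfl, hws, hne⟩ hS
          omega
    · intro hmax u hu hS
      obtain ⟨s, hs, rfl, hws, hne⟩ := hu
      rcases subtree_chain hs hnd hs₂ hws hws₂ with hc | hc
      · by_cases he : s = s₂
        · subst he; exact le_refl _
        · exact le_of_lt (subtree_strict hnd hs hc he).1
      · by_cases he : s₂ = s
        · subst he; exact le_refl _
        · exfalso
          have h1 := (subtree_strict hnd hs₂ hc he).2
          have h2 := hmax _ ⟨s, hs, rfl, hws, hne⟩ hS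
          omega
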